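/- arXiv:1503.04619 — 5 statements merged into one kernel-verified Lean document; each statement's English description precedes it below -/
import Mathlib

section
/- The seven dice X₁ = (3,3,3,3,3,6), X₂ = (1,1,2,5,6,6), X₃ = (1,4,4,4,4,4), X₄ = (3,3,3,3,4,5), X₅ = (2,2,2,3,6,6), X₆ = (1,1,4,5,5,5), X₇ = (2,3,4,4,4,4) form a cycle of non-transitive dice of length 7: Xᵢ ≫ Xᵢ₊₁ for i = 1,…,6 and X₇ ≫ X₁, i.e. N(Xᵢ, Xᵢ₊₁) > 18 for i = 1,…,6 and N(X₇, X₁) > 18. -/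
/-- The winning count `N(X,Y)`: the number of pairs `(i,j)` with `Xᵢ > Yⱼ`. -/
def diceWins (X Y : Fin 6 → ℕ) : ℕ :=
  ((Finset.univ : Finset (Fin 6 × Fin 6)).filter (fun p => Y p.2 < X p.1)).card

theorem seven_cycle_nontransitive :
    18 < diceWins ![3,3,3,3,3,6] ![1,1,2,5,6,6] ∧
    18 < diceWins ![1,1,2,5,6,6] ![1,4,4,4,4,4] ∧
    18 < diceWins ![1,4,4,4,4,4] ![3,3,3,3,4,5] ∧
    18 < diceWins ![3,3,3,3,4,5] ![2,2,2,3,6,6] ∧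
    18 < diceWins ![2,2,2,3,6,6] ![1,1,4,5,5,5] ∧
    18 < diceWins ![1,1,4,5,5,5] ![2,3,4,4,4,4] ∧
    18 < diceWins ![2,3,4,4,4,4] ![3,3,3,3,3,6] := by
  refine ⟨?_,?_,?_,?_,?_,?_,?_⟩ <;> (unfold diceWins; decide)
end

section
/- Replacing the die (1,1,2,5,6,6) by (1,2,2,5,5,6) in the 7-cycle again yields a cycle of non-transitive dice of length 7: the seven dice Y₁ = (3,3,3,3,3,6), Y₂ = (1,2,2,5,5,6), Y₃ = (1,4,4,4,4,4), Y₄ = (3,3,3,3,4,5), Y₅ = (2,2,2,3,6,6), Y₆ = (1,1,4,5,5,5), Y₇ = (2,3,4,4,4,4) satisfy Yᵢ ≫ Yᵢ₊₁ for i = 1,…,6 and Y₇ ≫ Y₁. -/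
theorem seven_cycle_replacement_one :
    18 < diceWins ![3,3,3,3,3,6] ![1,2,2,5,5,6] ∧
    18 < diceWins ![1,2,2,5,5,6] ![1,4,4,4,4,4] ∧
    18 < diceWins ![1,4,4,4,4,4] ![3,3,3,3,4,5] ∧
    18 < diceWins ![3,3,3,3,4,5] ![2,2,2,3,6,6] ∧
    18 < diceWins ![2,2,2,3,6,6] ![1,1,4,5,5,5] ∧
    18 < diceWins ![1,1,4,5,5,5] ![2,3,4,4,4,4] ∧
    18 < diceWins ![2,3,4,4,4,4] ![3,3,3,3,3,6] := by
  refine ⟨?_,?_,?_,?_,?_,?_,?_⟩ <;> decide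
end

section
/- Replacing the die (1,1,2,5,6,6) by (2,2,2,5,5,5) in the 7-cycle again yields a cycle of non-transitive dice of length 7: the seven dice Z₁ = (3,3,3,3,3,6), Z₂ = (2,2,2,5,5,5), Z₃ = (1,4,4,4,4,4), Z₄ = (3,3,3,3,4,5), Z₅ = (2,2,2,3,6,6), Z₆ = (1,1,4,5,5,5), Z₇ = (2,3,4,4,4,4) satisfy Zᵢ ≫ Zᵢ₊₁ for i = 1,…,6 and Z₇ ≫ Z₁. -/
theorem seven_cycle_replacement_two :
    18 < diceWins ![3,3,3,3,3,6] ![2,2,2,5,5,5] ∧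
    18 < diceWins ![2,2,2,5,5,5] ![1,4,4,4,4,4] ∧
    18 < diceWins ![1,4,4,4,4,4] ![3,3,3,3,4,5] ∧
    18 < diceWins ![3,3,3,3,4,5] ![2,2,2,3,6,6] ∧
    18 < diceWins ![2,2,2,3,6,6] ![1,1,4,5,5,5] ∧
    18 < diceWins ![1,1,4,5,5,5] ![2,3,4,4,4,4] ∧
    18 < diceWins ![2,3,4,4,4,4] ![3,3,3,3,3,6] := by
  refine ⟨?_,?_,?_,?_,?_,?_,?_⟩ <;> (unfold diceWins; decide)
end

section
/- Each of the ten dice (3,3,3,3,3,6), (1,1,2,5,6,6), (1,4,4,4,4,4), (3,3,3,3,4,5), (2,2,2,3,6,6), (1,1,4,5,5,5), (2,3,4,4,4,4), (3,3,3,4,4,4), (1,2,2,5,5,6), (2,2,2,5,5,5) is an element of DT(6) (its entries are nondecreasing, lie in {1,…,6}, and sum to 21) and is non-transitive, i.e. appears in some cycle of pairwise distinct non-transitive dice contained in DT(6). -/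
/-- Die `Y` beats die `X` if `N(Y,X) > 18`, i.e. `P(Y > X) > 1/2`. -/
def Beats (Y X : Fin 6 → ℕ) : Prop := 18 < diceWins Y X

/-- Membership in `DT(6)`: nondecreasing entries in `{1,…,6}` summing to `21`. -/
def DT6 (d : Fin 6 → ℕ) : Prop :=
  (∀ i, 1 ≤ d i ∧ d i ≤ 6) ∧ (∀ i j : Fin 6, i ≤ j → d i ≤ d j) ∧ (∑ i, d i) = 21

/-- `X 0, X 1, …, X (r-1)` is a cycle of non-transitive dice of length `r` whose
members are pairwise distinct elements of `DT(6)`. -/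
def IsDTCycle (r : ℕ) (X : ℕ → (Fin 6 → ℕ)) : Prop :=
  0 < r ∧ (∀ i < r, DT6 (X i)) ∧ (∀ i < r, ∀ j < r, i ≠ j → X i ≠ X j) ∧
  (∀ i, i + 1 < r → Beats (X i) (X (i + 1))) ∧ Beats (X (r - 1)) (X 0)

/-- A die of `DT(6)` is non-transitive if it appears in some cycle of pairwise
distinct non-transitive dice contained in `DT(6)`. -/
def NonTransitiveDT6 (d : Fin 6 → ℕ) : Prop :=
  ∃ r X, IsDTCycle r X ∧ ∃ i < r, X i = d

instance (d : Fin 6 → ℕ) : Decidable (DT6 d) := by unfold DT6; infer_instance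
instance (Y X : Fin 6 → ℕ) : Decidable (Beats Y X) := by unfold Beats diceWins; infer_instance

private def cyc3 (A B C : Fin 6 → ℕ) : ℕ → (Fin 6 → ℕ)
  | 0 => A
  | 1 => B
  | _ => C

private lemma mkCycle3 (A B C : Fin 6 → ℕ) (hA : DT6 A) (hB : DT6 B) (hC : DT6 C)
    (hAB : A ≠ B) (hAC : A ≠ C) (hBC : B ≠ C)
    (h1 : Beats A B) (h2 : Beats B C) (h3 : Beats C A) :
    IsDTCycle 3 (cyc3 A B C) := by
  refine ⟨by norm_num, ?_, ?_, ?_, ?_⟩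
  · intro i hi; interval_cases i <;> assumption
  · intro i hi j hj hne
    interval_cases i <;> interval_cases j <;>
      first
      | exact absurd rfl hne
      | assumption
      | exact Ne.symm hAB | exact Ne.symm hAC | exact Ne.symm hBC
  · intro i hi
    have h : i < 2 := by omega
    interval_cases i <;> assumption
  · exact h3

private def cyc4 (A B C D : Fin 6 → ℕ) : ℕ → (Fin 6 → ℕ)
  | 0 => A
  | 1 => B
  | 2 => C
  | _ => D

private lemma mkCycle4 (A B C D : Fin 6 → ℕ) (hA : DT6 A) (hB : DT6 B) (hC : DT6 C) (hD : DT6 D)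
    (hAB : A ≠ B) (hAC : A ≠ C) (hAD : A ≠ D) (hBC : B ≠ C) (hBD : B ≠ D) (hCD : C ≠ D)
    (h1 : Beats A B) (h2 : Beats B C) (h3 : Beats C D) (h4 : Beats D A) :
    IsDTCycle 4 (cyc4 A B C D) := by
  refine ⟨by norm_num, ?_, ?_, ?_, ?_⟩
  · intro i hi; interval_cases i <;> assumption
  · intro i hi j hj hne
    interval_cases i <;> interval_cases j <;>
      first
      | exact absurd rfl hne
      | assumption
      | exact Ne.symm hAB | exact Ne.symm hAC | exact Ne.symm hAD
      | exact Ne.symm hBC | exact Ne.symm hBD | exact Ne.symm hCD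
  · intro i hi
    have h : i < 3 := by omega
    interval_cases i <;> assumption
  · exact h4

theorem ten_dice_in_DT6_and_nontransitive :
    ∀ d ∈ ([![3,3,3,3,3,6], ![1,1,2,5,6,6], ![1,4,4,4,4,4], ![3,3,3,3,4,5],
            ![2,2,2,3,6,6], ![1,1,4,5,5,5], ![2,3,4,4,4,4], ![3,3,3,4,4,4],
            ![1,2,2,5,5,6], ![2,2,2,5,5,5]] : List (Fin 6 → ℕ)),
      DT6 d ∧ NonTransitiveDT6 d := by
  intro d hd
  have c012 : IsDTCycle 3 (cyc3 ![3,3,3,3,3,6] ![1,1,2,5,6,6] ![1,4,4,4,4,4]) :=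
    mkCycle3 _ _ _ (by decide) (by decide) (by decide) (by decide) (by decide) (by decide)
      (by decide) (by decide) (by decide)
  have c2345 : IsDTCycle 4 (cyc4 ![1,4,4,4,4,4] ![3,3,3,3,4,5] ![2,2,2,3,6,6] ![1,1,4,5,5,5]) :=
    mkCycle4 _ _ _ _ (by decide) (by decide) (by decide) (by decide)
      (by decide) (by decide) (by decide) (by decide) (by decide) (by decide)
      (by decide) (by decide) (by decide) (by decide)
  have c564 : IsDTCycle 3 (cyc3 ![1,1,4,5,5,5] ![2,3,4,4,4,4] ![2,2,2,3,6,6]) :=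
    mkCycle3 _ _ _ (by decide) (by decide) (by decide) (by decide) (by decide) (by decide)
      (by decide) (by decide) (by decide)
  have c574 : IsDTCycle 3 (cyc3 ![1,1,4,5,5,5] ![3,3,3,4,4,4] ![2,2,2,3,6,6]) :=
    mkCycle3 _ _ _ (by decide) (by decide) (by decide) (by decide) (by decide) (by decide)
      (by decide) (by decide) (by decide)
  have c082 : IsDTCycle 3 (cyc3 ![3,3,3,3,3,6] ![1,2,2,5,5,6] ![1,4,4,4,4,4]) :=
    mkCycle3 _ _ _ (by decide) (by decide) (by decide) (by decide) (by decide) (by decide)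
      (by decide) (by decide) (by decide)
  have c092 : IsDTCycle 3 (cyc3 ![3,3,3,3,3,6] ![2,2,2,5,5,5] ![1,4,4,4,4,4]) :=
    mkCycle3 _ _ _ (by decide) (by decide) (by decide) (by decide) (by decide) (by decide)
      (by decide) (by decide) (by decide)
  fin_cases hd
  · exact ⟨by decide, 3, _, c012, 0, by norm_num, rfl⟩
  · exact ⟨by decide, 3, _, c012, 1, by norm_num, rfl⟩
  · exact ⟨by decide, 3, _, c012, 2, by norm_num, rfl⟩
  · exact ⟨by decide, 4, _, c2345, 1, by norm_num, rfl⟩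
  · exact ⟨by decide, 4, _, c2345, 2, by norm_num, rfl⟩
  · exact ⟨by decide, 4, _, c2345, 3, by norm_num, rfl⟩
  · exact ⟨by decide, 3, _, c564, 1, by norm_num, rfl⟩
  · exact ⟨by decide, 3, _, c574, 1, by norm_num, rfl⟩
  · exact ⟨by decide, 3, _, c082, 1, by norm_num, rfl⟩
  · exact ⟨by decide, 3, _, c092, 1, by norm_num, rfl⟩
end

section
/- The set NTT(6) of non-transitive dice in DT(6) consists of exactly the ten dice (3,3,3,3,3,6), (1,1,2,5,6,6), (1,4,4,4,4,4), (3,3,3,3,4,5), (2,2,2,3,6,6), (1,1,4,5,5,5), (2,3,4,4,4,4), (3,3,3,4,4,4), (1,2,2,5,5,6), (2,2,2,5,5,5); in particular, the cardinality of NTT(6) is 10. -/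
/-- `NTT(6)`: the set of non-transitive dice in `DT(6)`. -/
def NTT6 : Set (Fin 6 → ℕ) := {d | DT6 d ∧ NonTransitiveDT6 d}

instance inst_s14 (Y X : Fin 6 → ℕ) : Decidable (Beats Y X) := by unfold Beats; infer_instance
/-- All 32 dice of `DT(6)`, each paired with its potential value. -/
def pairsL : List ((Fin 6 → ℕ) × ℕ) := [
  (![1,1,1,6,6,6], 3),
  (![1,1,2,5,6,6], 15),
  (![1,1,3,4,6,6], 5),
  (![1,1,3,5,5,6], 4),
  (![1,1,4,4,5,6], 11),
  (![1,1,4,5,5,5], 15),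
  (![1,2,2,4,6,6], 19),
  (![1,2,2,5,5,6], 15),
  (![1,2,3,3,6,6], 21),
  (![1,2,3,4,5,6], 10),
  (![1,2,3,5,5,5], 0),
  (![1,2,4,4,4,6], 1),
  (![1,2,4,4,5,5], 14),
  (![1,3,3,3,5,6], 20),
  (![1,3,3,4,4,6], 13),
  (![1,3,3,4,5,5], 9),
  (![1,3,4,4,4,5], 7),
  (![1,4,4,4,4,4], 15),
  (![2,2,2,3,6,6], 15),
  (![2,2,2,4,5,6], 22),
  (![2,2,2,5,5,5], 15),
  (![2,2,3,3,5,6], 18),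
  (![2,2,3,4,4,6], 8),
  (![2,2,3,4,5,5], 6),
  (![2,2,4,4,4,5], 12),
  (![2,3,3,3,4,6], 17),
  (![2,3,3,3,5,5], 16),
  (![2,3,3,4,4,5], 2),
  (![2,3,4,4,4,4], 15),
  (![3,3,3,3,3,6], 15),
  (![3,3,3,3,4,5], 15),
  (![3,3,3,4,4,4], 15)
]

def allL : List (Fin 6 → ℕ) := pairsL.map Prod.fst

def tenL : List (Fin 6 → ℕ) :=
  [![3,3,3,3,3,6], ![1,1,2,5,6,6], ![1,4,4,4,4,4], ![3,3,3,3,4,5],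
   ![2,2,2,3,6,6], ![1,1,4,5,5,5], ![2,3,4,4,4,4], ![3,3,3,4,4,4],
   ![1,2,2,5,5,6], ![2,2,2,5,5,5]]

/-- The potential function on dice. -/
def phi (d : Fin 6 → ℕ) : ℕ :=
  pairsL.foldr (fun p acc => if p.1 = d then p.2 else acc) 0

lemma enum_aux (a0 a1 a2 a3 a4 a5 : ℕ)
    (l0 : 1 ≤ a0) (u0 : a0 ≤ 6) (l1 : 1 ≤ a1) (u1 : a1 ≤ 6)
    (l2 : 1 ≤ a2) (u2 : a2 ≤ 6) (l3 : 1 ≤ a3) (u3 : a3 ≤ 6)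
    (l4 : 1 ≤ a4) (u4 : a4 ≤ 6) (l5 : 1 ≤ a5) (u5 : a5 ≤ 6)
    (m01 : a0 ≤ a1) (m12 : a1 ≤ a2) (m23 : a2 ≤ a3) (m34 : a3 ≤ a4) (m45 : a4 ≤ a5)
    (hs : a0 + a1 + a2 + a3 + a4 + a5 = 21) :
    ![a0, a1, a2, a3, a4, a5] ∈ allL := by
  interval_cases a0 <;> interval_cases a1 <;> interval_cases a2 <;>
    interval_cases a3 <;> interval_cases a4 <;> interval_cases a5 <;>
    first | (exfalso; omega) | decide

lemma mem_allL {d : Fin 6 → ℕ} (h : DT6 d) : d ∈ allL := by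
  obtain ⟨hb, hm, hs⟩ := h
  have e : d = ![d 0, d 1, d 2, d 3, d 4, d 5] := by
    funext i; fin_cases i <;> rfl
  rw [Fin.sum_univ_six] at hs
  rw [e]
  exact enum_aux _ _ _ _ _ _ (hb 0).1 (hb 0).2 (hb 1).1 (hb 1).2 (hb 2).1 (hb 2).2
    (hb 3).1 (hb 3).2 (hb 4).1 (hb 4).2 (hb 5).1 (hb 5).2
    (hm 0 1 (by decide)) (hm 1 2 (by decide)) (hm 2 3 (by decide))
    (hm 3 4 (by decide)) (hm 4 5 (by decide)) hs

/-- Key verified fact: along every `Beats` edge the potential weakly increases,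
and strictly unless both endpoints are among the ten non-transitive dice. -/
lemma key : ∀ y ∈ allL, ∀ x ∈ allL, Beats y x →
    phi y ≤ phi x ∧ (phi y = phi x → y ∈ tenL ∧ x ∈ tenL) := by decide

lemma ntt_of_triangle (a b c : Fin 6 → ℕ) (ha : DT6 a) (hb : DT6 b) (hc : DT6 c)
    (hab : a ≠ b) (hbc : b ≠ c) (hac : a ≠ c)
    (h1 : Beats a b) (h2 : Beats b c) (h3 : Beats c a) : NonTransitiveDT6 a := by
  refine ⟨3, fun n => if n = 0 then a else if n = 1 then b else c,
    ⟨by omega, ?_, ?_, ?_, ?_⟩, 0, by omega, rfl⟩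
  · intro i hi
    interval_cases i <;> simpa using (by assumption : DT6 _)
  · have hba : b ≠ a := Ne.symm hab
    have hca : c ≠ a := Ne.symm hac
    have hcb : c ≠ b := Ne.symm hbc
    intro i hi j hj hij
    interval_cases i <;> interval_cases j <;> simp_all
  · intro i hi
    have hi' : i < 2 := by omega
    interval_cases i <;> simpa using (by assumption : Beats _ _)
  · simpa using h3

theorem NTT6_eq_ten_dice :
    NTT6 = ({![3,3,3,3,3,6], ![1,1,2,5,6,6], ![1,4,4,4,4,4], ![3,3,3,3,4,5],
             ![2,2,2,3,6,6], ![1,1,4,5,5,5], ![2,3,4,4,4,4], ![3,3,3,4,4,4],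
             ![1,2,2,5,5,6], ![2,2,2,5,5,5]} : Set (Fin 6 → ℕ)) ∧
    NTT6.ncard = 10 := by
  have hset : NTT6 = ({![3,3,3,3,3,6], ![1,1,2,5,6,6], ![1,4,4,4,4,4], ![3,3,3,3,4,5],
             ![2,2,2,3,6,6], ![1,1,4,5,5,5], ![2,3,4,4,4,4], ![3,3,3,4,4,4],
             ![1,2,2,5,5,6], ![2,2,2,5,5,5]} : Set (Fin 6 → ℕ)) := by
    ext d
    constructor
    · rintro ⟨hd, r, X, ⟨hr, hDT, hdist, hstep, hlast⟩, i, hir, hXi⟩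
      have hL : ∀ j, j < r → X j ∈ allL := fun j hj => mem_allL (hDT j hj)
      have edge : ∀ j, j + 1 < r → phi (X j) ≤ phi (X (j + 1)) ∧
          (phi (X j) = phi (X (j + 1)) → X j ∈ tenL ∧ X (j + 1) ∈ tenL) :=
        fun j hj => key _ (hL j (by omega)) _ (hL _ hj) (hstep j hj)
      have edgeLast := key _ (hL (r - 1) (by omega)) _ (hL 0 hr) hlast
      have mono : ∀ k, k < r → ∀ j, j ≤ k → phi (X j) ≤ phi (X k) := by
        intro k
        induction k with
        | zero => intro _ j hj; interval_cases j; exact le_refl _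
        | succ n ih =>
          intro hk j hj
          by_cases hjn : j = n + 1
          · subst hjn; exact le_refl _
          · exact le_trans (ih (by omega) j (by omega)) (edge n hk).1
      have eAll : ∀ k, k < r → phi (X k) = phi (X 0) := by
        intro k hk
        have h1 := mono k hk 0 (Nat.zero_le _)
        have h2 := mono (r - 1) (by omega) k (by omega)
        omega
      have hiten : X i ∈ tenL := by
        by_cases hsucc : i + 1 < r
        · exact ((edge i hsucc).2 (by rw [eAll i hir, eAll (i + 1) hsucc])).1
        · have : i = r - 1 := by omega
          subst this
          exact (edgeLast.2 (eAll (r - 1) (by omega))).1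
      rw [← hXi]
      simp only [tenL, List.mem_cons, List.not_mem_nil, or_false] at hiten
      simp only [Set.mem_insert_iff, Set.mem_singleton_iff]
      tauto
    · intro hd
      have T1 : NonTransitiveDT6 ![3,3,3,3,3,6] :=
        ntt_of_triangle ![3,3,3,3,3,6] ![1,1,2,5,6,6] ![1,4,4,4,4,4]
          (by decide) (by decide) (by decide) (by decide) (by decide) (by decide)
          (by decide) (by decide) (by decide)
      have T1b : NonTransitiveDT6 ![1,1,2,5,6,6] :=
        ntt_of_triangle ![1,1,2,5,6,6] ![1,4,4,4,4,4] ![3,3,3,3,3,6]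
          (by decide) (by decide) (by decide) (by decide) (by decide) (by decide)
          (by decide) (by decide) (by decide)
      have T1c : NonTransitiveDT6 ![1,4,4,4,4,4] :=
        ntt_of_triangle ![1,4,4,4,4,4] ![3,3,3,3,3,6] ![1,1,2,5,6,6]
          (by decide) (by decide) (by decide) (by decide) (by decide) (by decide)
          (by decide) (by decide) (by decide)
      have T2 : NonTransitiveDT6 ![3,3,3,4,4,4] :=
        ntt_of_triangle ![3,3,3,4,4,4] ![2,2,2,3,6,6] ![1,1,4,5,5,5]
          (by decide) (by decide) (by decide) (by decide) (by decide) (by decide)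
          (by decide) (by decide) (by decide)
      have T2b : NonTransitiveDT6 ![2,2,2,3,6,6] :=
        ntt_of_triangle ![2,2,2,3,6,6] ![1,1,4,5,5,5] ![3,3,3,4,4,4]
          (by decide) (by decide) (by decide) (by decide) (by decide) (by decide)
          (by decide) (by decide) (by decide)
      have T2c : NonTransitiveDT6 ![1,1,4,5,5,5] :=
        ntt_of_triangle ![1,1,4,5,5,5] ![3,3,3,4,4,4] ![2,2,2,3,6,6]
          (by decide) (by decide) (by decide) (by decide) (by decide) (by decide)
          (by decide) (by decide) (by decide)
      have T3 : NonTransitiveDT6 ![3,3,3,3,4,5] :=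
        ntt_of_triangle ![3,3,3,3,4,5] ![2,2,2,3,6,6] ![1,1,4,5,5,5]
          (by decide) (by decide) (by decide) (by decide) (by decide) (by decide)
          (by decide) (by decide) (by decide)
      have T4 : NonTransitiveDT6 ![2,2,2,5,5,5] :=
        ntt_of_triangle ![2,2,2,5,5,5] ![1,4,4,4,4,4] ![3,3,3,3,3,6]
          (by decide) (by decide) (by decide) (by decide) (by decide) (by decide)
          (by decide) (by decide) (by decide)
      have T5 : NonTransitiveDT6 ![1,2,2,5,5,6] :=
        ntt_of_triangle ![1,2,2,5,5,6] ![1,4,4,4,4,4] ![3,3,3,3,3,6]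
          (by decide) (by decide) (by decide) (by decide) (by decide) (by decide)
          (by decide) (by decide) (by decide)
      have T6 : NonTransitiveDT6 ![2,3,4,4,4,4] :=
        ntt_of_triangle ![2,3,4,4,4,4] ![2,2,2,3,6,6] ![1,1,4,5,5,5]
          (by decide) (by decide) (by decide) (by decide) (by decide) (by decide)
          (by decide) (by decide) (by decide)
      simp only [Set.mem_insert_iff, Set.mem_singleton_iff] at hd
      rcases hd with h | h | h | h | h | h | h | h | h | h <;> subst h <;>
        exact ⟨by decide, by assumption⟩
  refine ⟨hset, ?_⟩
  rw [hset]
  rw [show ({![3,3,3,3,3,6], ![1,1,2,5,6,6], ![1,4,4,4,4,4], ![3,3,3,3,4,5],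
             ![2,2,2,3,6,6], ![1,1,4,5,5,5], ![2,3,4,4,4,4], ![3,3,3,4,4,4],
             ![1,2,2,5,5,6], ![2,2,2,5,5,5]} : Set (Fin 6 → ℕ)) =
      (↑({![3,3,3,3,3,6], ![1,1,2,5,6,6], ![1,4,4,4,4,4], ![3,3,3,3,4,5],
             ![2,2,2,3,6,6], ![1,1,4,5,5,5], ![2,3,4,4,4,4], ![3,3,3,4,4,4],
             ![1,2,2,5,5,6], ![2,2,2,5,5,5]} : Finset (Fin 6 → ℕ)) : Set (Fin 6 → ℕ)) by
    simp]
  rw [Set.ncard_coe_finset]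
  decide
end
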